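/- arXiv:2404.15417 — 4 statements merged into one kernel-verified Lean document; each statement's English description precedes it below -/
import Mathlib

section
/- Let (w_t)_{t≤T} be a sequence of random variables adapted to a filtration (H_t)_{t≤T} with 0 ≤ w_t ≤ R almost surely. Then with probability at least 1 − δ, both ∑_{t=1}^T w_t ≤ (3/2) ∑_{t=1}^T E[w_t | H_{t−1}] + 4R log(2/δ) and ∑_{t=1}^T E[w_t | H_{t−1}] ≤ 2 ∑_{t=1}^T w_t + 8R log(2/δ). -/
/-!
For `a, b` with `exp (a x) ≤ 1 + b x` on `[0, R]` (the chord bound for the convex exponential),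
conditioning gives `E[exp (a w_t) | ℱ_{t-1}] ≤ 1 + b E[w_t | ℱ_{t-1}] ≤ exp (b E[w_t | ℱ_{t-1}])`,
so `exp (a ∑ w_t - b ∑ E[w_t | ℱ_{t-1}])` is a supermartingale started at `1`. By Markov's
inequality, `a ∑ w_t - b ∑ E[w_t | ℱ_{t-1}] ≥ log (2/δ)` then has probability at most `δ/2`.
The choices `(a, b) = (1/(4R), 3/(8R))` and `(-1/(4R), -1/(8R))`, admissible because
`exp (1/4) ≤ 4/3` and `exp (-1/4) ≤ 4/5`, give the two inequalities, and a union bound ends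
the proof.
-/

open MeasureTheory Finset Real ProbabilityTheory

lemma exp_mul_le_one_add_mul_of_mem_Icc {c R x : ℝ} (hR : 0 < R) (hx : x ∈ Set.Icc 0 R) :
    exp (c / R * x) ≤ 1 + (exp c - 1) / R * x := by
  have ht : x / R ∈ Set.Icc (0 : ℝ) 1 := ⟨div_nonneg hx.1 hR.le, div_le_one_of_le₀ hx.2 hR.le⟩
  have h := convexOn_exp.2 (Set.mem_univ 0) (Set.mem_univ c) (sub_nonneg.2 ht.2) ht.1
    (sub_add_cancel 1 (x / R))
  simp only [smul_eq_mul, mul_zero, zero_add, exp_zero, mul_one] at h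
  calc exp (c / R * x) = exp (x / R * c) := by ring_nf
    _ ≤ 1 - x / R + x / R * exp c := h
    _ = 1 + (exp c - 1) / R * x := by ring

lemma exp_div_four_mul_le {R x : ℝ} (hR : 0 < R) (hx : x ∈ Set.Icc 0 R) :
    exp (1 / 4 / R * x) ≤ 1 + 3 / 8 / R * x := by
  have h := add_one_le_exp (-(1 / 4) : ℝ)
  rw [exp_neg, le_inv_comm₀ (by norm_num) (exp_pos _)] at h
  refine (exp_mul_le_one_add_mul_of_mem_Icc hR hx).trans ?_
  gcongr
  · exact hx.1
  · linarith

lemma exp_neg_div_four_mul_le {R x : ℝ} (hR : 0 < R) (hx : x ∈ Set.Icc 0 R) :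
    exp (-(1 / 4) / R * x) ≤ 1 + -(1 / 8) / R * x := by
  have h := add_one_le_exp (1 / 4 : ℝ)
  rw [← inv_le_inv₀ (exp_pos _) (by norm_num), ← exp_neg] at h
  refine (exp_mul_le_one_add_mul_of_mem_Icc hR hx).trans ?_
  gcongr
  · exact hx.1
  · linarith

lemma exp_mul_le_exp_abs_mul {a R x : ℝ} (hx : x ∈ Set.Icc 0 R) : exp (a * x) ≤ exp (|a| * R) :=
  exp_le_exp.2 <| (mul_le_mul_of_nonneg_right (le_abs_self a) hx.1).trans
    (mul_le_mul_of_nonneg_left hx.2 (abs_nonneg a))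

lemma one_sub_add_le_measureReal_of_compl_inter_compl_subset {Ω : Type*}
    {m0 : MeasurableSpace Ω} {μ : Measure Ω} [IsProbabilityMeasure μ] {s A B : Set Ω}
    (h : Aᶜ ∩ Bᶜ ⊆ s) : 1 - (μ.real A + μ.real B) ≤ μ.real s := by
  have hcompl : sᶜ ⊆ A ∪ B := by rwa [Set.compl_subset_comm, Set.compl_union]
  have hunion := (measureReal_mono hcompl (measure_ne_top μ _)).trans (measureReal_union_le A B)
  have hsplit := measureReal_union_le (μ := μ) s sᶜ
  rw [Set.union_compl_self, probReal_univ] at hsplit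
  linarith

section CondExp

variable {Ω : Type*} {m m0 : MeasurableSpace Ω} {μ : Measure Ω} [IsFiniteMeasure μ]
  {f : Ω → ℝ} {R : ℝ}

lemma integrable_of_ae_mem_Icc (hf : AEStronglyMeasurable f μ)
    (hbdd : ∀ᵐ ω ∂μ, f ω ∈ Set.Icc 0 R) : Integrable f μ :=
  .of_bound hf R (hbdd.mono fun _ h => (norm_of_nonneg h.1).trans_le h.2)

lemma integrable_exp_mul (hf : AEStronglyMeasurable f μ)
    (hbdd : ∀ᵐ ω ∂μ, f ω ∈ Set.Icc 0 R) (a : ℝ) : Integrable (fun ω => exp (a * f ω)) μ :=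
  .of_bound (continuous_exp.comp_aestronglyMeasurable (hf.const_mul a)) (exp (|a| * R))
    (hbdd.mono fun _ h => (norm_of_nonneg (exp_pos _).le).trans_le (exp_mul_le_exp_abs_mul h))

lemma ae_mem_Icc_condExp (hm : m ≤ m0) (hf : Integrable f μ)
    (hbdd : ∀ᵐ ω ∂μ, f ω ∈ Set.Icc 0 R) : ∀ᵐ ω ∂μ, μ[f | m] ω ∈ Set.Icc 0 R := by
  have hle : μ[f | m] ≤ᵐ[μ] fun _ => R := by
    simpa only [condExp_const hm] using
      condExp_mono (m := m) hf (integrable_const R) (hbdd.mono fun _ h => h.2)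
  filter_upwards [condExp_nonneg (m := m) (hbdd.mono fun _ h => h.1), hle] with ω h0 hR
  exact ⟨h0, hR⟩

lemma condExp_exp_mul_le (hm : m ≤ m0) (hf : AEStronglyMeasurable f μ)
    (hbdd : ∀ᵐ ω ∂μ, f ω ∈ Set.Icc 0 R) {a b : ℝ}
    (hab : ∀ x ∈ Set.Icc 0 R, exp (a * x) ≤ 1 + b * x) :
    μ[fun ω => exp (a * f ω) | m] ≤ᵐ[μ] fun ω => exp (b * μ[f | m] ω) := by
  have hf_int := integrable_of_ae_mem_Icc hf hbdd
  have hlin_int : Integrable (fun ω => 1 + b * f ω) μ :=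
    (integrable_const 1).add (hf_int.const_mul b)
  have hexp_le : (fun ω => exp (a * f ω)) ≤ᵐ[μ] fun ω => 1 + b * f ω :=
    hbdd.mono fun ω h => hab _ h
  have hlin : μ[fun ω => 1 + b * f ω | m] =ᵐ[μ] fun ω => 1 + b * μ[f | m] ω := by
    have hsplit : (fun ω => 1 + b * f ω) = (fun _ => (1 : ℝ)) + b • f := rfl
    filter_upwards [condExp_add (integrable_const 1) (hf_int.smul b) m,
      condExp_smul (μ := μ) b f m] with ω hadd hsmul
    rw [hsplit, hadd, Pi.add_apply, hsmul, condExp_const hm]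
    rfl
  filter_upwards [condExp_mono (m := m) (integrable_exp_mul hf hbdd a) hlin_int hexp_le, hlin]
    with ω hmono hlin_ω
  linarith [add_one_le_exp (b * μ[f | m] ω)]

end CondExp

section ExpProcess

variable {Ω : Type*} {m0 : MeasurableSpace Ω} {μ : Measure Ω} {ℱ : Filtration ℕ m0}
  {w : ℕ → Ω → ℝ} {R a b : ℝ}

noncomputable def expCompensatedSum (μ : Measure Ω) (ℱ : Filtration ℕ m0) (w : ℕ → Ω → ℝ)
    (a b : ℝ) (n : ℕ) (ω : Ω) : ℝ :=
  exp (a * ∑ t ∈ Icc 1 n, w t ω - b * ∑ t ∈ Icc 1 n, μ[w t | ℱ (t - 1)] ω)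

lemma expCompensatedSum_zero : expCompensatedSum μ ℱ w a b 0 = 1 := by
  ext ω
  simp [expCompensatedSum]

lemma expCompensatedSum_succ (n : ℕ) (ω : Ω) :
    expCompensatedSum μ ℱ w a b (n + 1) ω =
      expCompensatedSum μ ℱ w a b n ω * exp (-b * μ[w (n + 1) | ℱ n] ω) *
        exp (a * w (n + 1) ω) := by
  simp only [expCompensatedSum, ← exp_add, sum_Icc_succ_top (Nat.le_add_left 1 n),
    Nat.add_sub_cancel]
  ring_nf

lemma stronglyAdapted_expCompensatedSum (hadapted : ∀ t, Measurable[ℱ t] (w t)) :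
    StronglyAdapted ℱ (expCompensatedSum μ ℱ w a b) := by
  intro n
  refine Measurable.stronglyMeasurable (Measurable.exp ?_)
  refine ((Finset.measurable_sum _ fun t ht => ?_).const_mul a).sub
    ((Finset.measurable_sum _ fun t ht => ?_).const_mul b)
  · exact (hadapted t).mono (ℱ.mono (mem_Icc.1 ht).2) le_rfl
  · exact stronglyMeasurable_condExp.measurable.mono (ℱ.mono (by grind)) le_rfl

section FiniteMeasure

variable [IsFiniteMeasure μ]

lemma integrable_expCompensatedSum (hadapted : ∀ t, Measurable[ℱ t] (w t))
    (hbdd : ∀ t, ∀ᵐ ω ∂μ, w t ω ∈ Set.Icc 0 R) (n : ℕ) :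
    Integrable (expCompensatedSum μ ℱ w a b n) μ := by
  induction n with
  | zero => rw [expCompensatedSum_zero]; exact integrable_const 1
  | succ n ih =>
    have hwm := (hadapted (n + 1)).mono (ℱ.le _) le_rfl
    have hw_int := integrable_of_ae_mem_Icc hwm.aestronglyMeasurable (hbdd (n + 1))
    have hfactor_bdd : ∀ᵐ ω ∂μ, ‖exp (-b * μ[w (n + 1) | ℱ n] ω) * exp (a * w (n + 1) ω)‖ ≤
        exp (|-b| * R) * exp (|a| * R) := by
      filter_upwards [hbdd (n + 1), ae_mem_Icc_condExp (ℱ.le n) hw_int (hbdd (n + 1))]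
        with ω hw hE
      rw [norm_of_nonneg (by positivity)]
      exact mul_le_mul (exp_mul_le_exp_abs_mul hE) (exp_mul_le_exp_abs_mul hw)
        (exp_pos _).le (exp_pos _).le
    have hfactor_meas : AEStronglyMeasurable
        (fun ω => exp (-b * μ[w (n + 1) | ℱ n] ω) * exp (a * w (n + 1) ω)) μ :=
      ((stronglyMeasurable_condExp.mono (ℱ.le n)).measurable.const_mul (-b)).exp.mul
        (hwm.const_mul a).exp |>.aestronglyMeasurable
    refine (ih.mul_bdd hfactor_meas hfactor_bdd).congr (ae_of_all _ fun ω => ?_)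
    simp only [expCompensatedSum_succ, mul_assoc]

lemma condExp_expCompensatedSum_succ_le (hadapted : ∀ t, Measurable[ℱ t] (w t))
    (hbdd : ∀ t, ∀ᵐ ω ∂μ, w t ω ∈ Set.Icc 0 R)
    (hab : ∀ x ∈ Set.Icc 0 R, exp (a * x) ≤ 1 + b * x) (n : ℕ) :
    μ[expCompensatedSum μ ℱ w a b (n + 1) | ℱ n] ≤ᵐ[μ] expCompensatedSum μ ℱ w a b n := by
  set G : Ω → ℝ := fun ω => expCompensatedSum μ ℱ w a b n ω * exp (-b * μ[w (n + 1) | ℱ n] ω)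
  set f : Ω → ℝ := fun ω => exp (a * w (n + 1) ω)
  have hsplit : expCompensatedSum μ ℱ w a b (n + 1) = G * f :=
    funext (expCompensatedSum_succ n)
  have hG : StronglyMeasurable[ℱ n] G :=
    (stronglyAdapted_expCompensatedSum hadapted n).mul
      (stronglyMeasurable_condExp.measurable.const_mul (-b)).exp.stronglyMeasurable
  have hwm := (hadapted (n + 1)).mono (ℱ.le _) le_rfl
  have hf_int : Integrable f μ := integrable_exp_mul hwm.aestronglyMeasurable (hbdd (n + 1)) a
  have hpull : μ[G * f | ℱ n] =ᵐ[μ] G * μ[f | ℱ n] :=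
    condExp_mul_of_stronglyMeasurable_left hG
      (hsplit ▸ integrable_expCompensatedSum hadapted hbdd (n + 1)) hf_int
  filter_upwards [hpull, condExp_exp_mul_le (ℱ.le n) hwm.aestronglyMeasurable (hbdd (n + 1)) hab]
    with ω hpull hcond
  rw [hsplit, hpull, Pi.mul_apply]
  calc G ω * μ[f | ℱ n] ω ≤ G ω * exp (b * μ[w (n + 1) | ℱ n] ω) :=
        mul_le_mul_of_nonneg_left hcond (mul_pos (exp_pos _) (exp_pos _)).le
    _ = expCompensatedSum μ ℱ w a b n ω := by
        simp only [G, mul_assoc, ← exp_add, neg_mul, neg_add_cancel, exp_zero, mul_one]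

lemma supermartingale_expCompensatedSum (hadapted : ∀ t, Measurable[ℱ t] (w t))
    (hbdd : ∀ t, ∀ᵐ ω ∂μ, w t ω ∈ Set.Icc 0 R)
    (hab : ∀ x ∈ Set.Icc 0 R, exp (a * x) ≤ 1 + b * x) :
    Supermartingale (expCompensatedSum μ ℱ w a b) ℱ μ :=
  supermartingale_nat (stronglyAdapted_expCompensatedSum hadapted)
    (integrable_expCompensatedSum hadapted hbdd)
    (condExp_expCompensatedSum_succ_le hadapted hbdd hab)

end FiniteMeasure

variable [IsProbabilityMeasure μ]

lemma integral_expCompensatedSum_le_one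
    (hadapted : ∀ t, Measurable[ℱ t] (w t)) (hbdd : ∀ t, ∀ᵐ ω ∂μ, w t ω ∈ Set.Icc 0 R)
    (hab : ∀ x ∈ Set.Icc 0 R, exp (a * x) ≤ 1 + b * x) (n : ℕ) :
    ∫ ω, expCompensatedSum μ ℱ w a b n ω ∂μ ≤ 1 := by
  simpa [expCompensatedSum_zero] using
    (supermartingale_expCompensatedSum hadapted hbdd hab).setIntegral_le (Nat.zero_le n)
      MeasurableSet.univ

lemma measureReal_compensatedSum_ge_le_exp_neg
    (hadapted : ∀ t, Measurable[ℱ t] (w t)) (hbdd : ∀ t, ∀ᵐ ω ∂μ, w t ω ∈ Set.Icc 0 R)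
    (hab : ∀ x ∈ Set.Icc 0 R, exp (a * x) ≤ 1 + b * x) (n : ℕ) (L : ℝ) :
    μ.real {ω | L ≤ a * ∑ t ∈ Icc 1 n, w t ω - b * ∑ t ∈ Icc 1 n, μ[w t | ℱ (t - 1)] ω} ≤
      exp (-L) := by
  have hint := integrable_expCompensatedSum (a := a) (b := b) hadapted hbdd n
  calc _ ≤ exp (-1 * L) * mgf (fun ω => a * ∑ t ∈ Icc 1 n, w t ω
          - b * ∑ t ∈ Icc 1 n, μ[w t | ℱ (t - 1)] ω) μ 1 :=
        measure_ge_le_exp_mul_mgf L zero_le_one (by simp only [one_mul]; exact hint)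
    _ ≤ exp (-L) * 1 := by
        rw [neg_one_mul]
        gcongr
        simp only [mgf, one_mul]
        exact integral_expCompensatedSum_le_one hadapted hbdd hab n
    _ = exp (-L) := mul_one _

end ExpProcess

/-- multiplicative Freedman inequality. For an adapted
sequence `w t` with `0 ≤ w t ≤ R` a.s., with probability at least `1 - δ` both
`∑ w t ≤ (3/2) ∑ E[w t | ℱ (t-1)] + 4 R log(2/δ)` and
`∑ E[w t | ℱ (t-1)] ≤ 2 ∑ w t + 8 R log(2/δ)` hold. -/
theorem stmt_6 {Ω : Type*} {m0 : MeasurableSpace Ω} (μ : Measure Ω)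
    [IsProbabilityMeasure μ] (ℱ : Filtration ℕ m0) (T : ℕ) (R δ : ℝ)
    (hR : 0 < R) (hδ : δ ∈ Set.Ioo (0 : ℝ) 1)
    (w : ℕ → Ω → ℝ)
    (hadapted : ∀ t, Measurable[ℱ t] (w t))
    (hbdd : ∀ t, ∀ᵐ ω ∂μ, w t ω ∈ Set.Icc 0 R) :
    ENNReal.ofReal (1 - δ) ≤
      μ {ω |
        (∑ t ∈ Icc 1 T, w t ω ≤
            (3/2) * ∑ t ∈ Icc 1 T, (μ[w t | ℱ (t-1)]) ω + 4 * R * Real.log (2 / δ)) ∧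
        (∑ t ∈ Icc 1 T, (μ[w t | ℱ (t-1)]) ω ≤
            2 * ∑ t ∈ Icc 1 T, w t ω + 8 * R * Real.log (2 / δ))} := by
  set L := log (2 / δ)
  have hexpL : exp (-L) = δ / 2 := by rw [exp_neg, exp_log (div_pos two_pos hδ.1), inv_div]
  have hupper := measureReal_compensatedSum_ge_le_exp_neg hadapted hbdd
    (fun x hx => exp_div_four_mul_le hR hx) T L
  have hlower := measureReal_compensatedSum_ge_le_exp_neg hadapted hbdd
    (fun x hx => exp_neg_div_four_mul_le hR hx) T L
  refine ENNReal.ofReal_le_of_le_toReal <| le_trans ?_ <|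
    (sub_le_sub_left (add_le_add hupper hlower) 1).trans
      (one_sub_add_le_measureReal_of_compl_inter_compl_subset ?_)
  · rw [hexpL]
    linarith
  · rintro ω ⟨hω_upper, hω_lower⟩
    simp only [Set.mem_compl_iff, Set.mem_ofPred_eq, not_le] at hω_upper hω_lower ⊢
    field_simp at hω_upper hω_lower
    constructor <;> linarith
end

section
/- Fix a layer h of an MDP satisfying pushforward coverability with constant C_push. Suppose functions g^(1),…,g^(T) taking values in [0,B] and state-action pairs (x^(1),a^(1)),…,(x^(T),a^(T)) satisfy, for all t ∈ [T], ∑_{i<t} E[(g^(t)(x_h))² | x_{h−1}=x^(i), a_{h−1}=a^(i)] ≤ β². Then ∑_{t=1}^T E[g^(t)(x_h) | x_{h−1}=x^(t), a_{h−1}=a^(t)] ≤ 2√(β² C_push T log(2T)) + 2B C_push, and consequently min_{t∈[T]} E[g^(t)(x_h) | x_{h−1}=x^(t), a_{h−1}=a^(t)] ≤ 2√(β² C_push log(2T)/T) + 2B C_push / T. -/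
/-!
Fix a next state `x` and write `a t = d t x`, `M = C_push μ x ≥ a t` and `S t = ∑_{i<t} a i`.
While `S t < M` we use `a t g t ≤ B a t`; these burn-in terms add up to at most `2 B M`, because
each of them is at most `M`. Once `S t ≥ M`, AM-GM gives
`a t g t ≤ η/2 · a t² / S t + S t g t² / (2η)`, and since `a t ≤ M ≤ S t` the potential `a t² / S t`
is at most `2M (log S (t+1) - log S t)`, which telescopes to `2M log T`. Summing over `x` turns
`∑ M` into `C_push` and `∑ S t g t²` into the left-hand side of the hypothesis, and optimizing over
`η` gives the bound on the sum, hence on the minimum.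
-/

open Finset Real
open scoped BigOperators

theorem Real.div_add_le_log_add_sub_log {s x : ℝ} (hs : 0 < s) (hx : 0 ≤ x) :
    x / (s + x) ≤ log (s + x) - log s := by
  have h := one_sub_inv_le_log_of_pos (x := (s + x) / s) (by positivity)
  rw [log_div (by positivity) hs.ne', inv_div] at h
  calc x / (s + x) = 1 - s / (s + x) := by field_simp; ring
    _ ≤ _ := h

theorem Real.le_two_mul_sqrt_mul_of_forall_le {S a b : ℝ} (ha : 0 < a)
    (h : ∀ η > 0, S ≤ η * a + b / η) : S ≤ 2 * √(a * b) := by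
  rcases le_or_gt S 0 with hS | hS
  · exact hS.trans (by positivity)
  have hη := h (S / (2 * a)) (by positivity)
  have hsq : (S / 2) ^ 2 ≤ a * b := by
    field_simp at hη
    nlinarith
  linarith [(le_sqrt' (by positivity)).2 hsq]

theorem summable_mul_of_mem_Icc {X : Type*} {d f : X → ℝ} {B : ℝ} (hd0 : ∀ x, 0 ≤ d x)
    (hd : Summable d) (hf : ∀ x, f x ∈ Set.Icc 0 B) : Summable fun x => d x * f x :=
  hd.mul_right B |>.of_nonneg_of_le (fun x => mul_nonneg (hd0 x) (hf x).1)
    fun x => mul_le_mul_of_nonneg_left (hf x).2 (hd0 x)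

namespace PushforwardCoverability

variable (M : ℝ) (a : ℕ → ℝ)

noncomputable def burnIn (t : ℕ) : ℝ := if ∑ i ∈ range t, a i < M then a t else 0

noncomputable def potential (t : ℕ) : ℝ :=
  if M ≤ ∑ i ∈ range t, a i then a t ^ 2 / ∑ i ∈ range t, a i else 0

variable {M a}

theorem sum_burnIn_le (ha : ∀ t, 0 ≤ a t) (haM : ∀ t, a t ≤ M) (n : ℕ) :
    ∑ t ∈ range n, burnIn M a t ≤ 2 * M := by
  induction n with
  | zero =>
    rw [sum_range_zero]
    linarith [ha 0, haM 0]
  | succ n ih =>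
    rw [sum_range_succ]
    by_cases h : ∑ i ∈ range n, a i < M
    · have hprev (t) (ht : t ∈ range n) : burnIn M a t = a t := by
        refine if_pos (lt_of_le_of_lt ?_ h)
        exact sum_le_sum_of_subset_of_nonneg (range_mono (mem_range.1 ht).le) fun i _ _ => ha i
      rw [sum_congr rfl hprev, burnIn, if_pos h]
      linarith [haM n]
    · rw [burnIn, if_neg h]
      linarith

theorem sq_div_le_two_mul_log_sub {s x : ℝ} (hx : 0 ≤ x) (hxM : x ≤ M) (hMs : M ≤ s)
    (hM : 0 < M) : x ^ 2 / s ≤ 2 * M * (log (s + x) - log s) := by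
  have hs : 0 < s := hM.trans_le hMs
  calc x ^ 2 / s ≤ M * x / s := by gcongr; nlinarith
    _ = 2 * M * (x / (2 * s)) := by field_simp
    _ ≤ 2 * M * (x / (s + x)) := by gcongr; linarith
    _ ≤ 2 * M * (log (s + x) - log s) := by gcongr; exact div_add_le_log_add_sub_log hs hx

theorem potential_le_two_mul_log_sub (ha : ∀ t, 0 ≤ a t) (haM : ∀ t, a t ≤ M) (hM : 0 < M)
    (t : ℕ) : potential M a t ≤ 2 * M * (log (max (∑ i ∈ range (t + 1), a i) M) -
      log (max (∑ i ∈ range t, a i) M)) := by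
  have hmono : ∑ i ∈ range t, a i ≤ ∑ i ∈ range (t + 1), a i := by
    rw [sum_range_succ]; linarith [ha t]
  by_cases h : M ≤ ∑ i ∈ range t, a i
  · rw [potential, if_pos h, max_eq_left h, max_eq_left (h.trans hmono), sum_range_succ]
    exact sq_div_le_two_mul_log_sub (ha t) (haM t) h hM
  · rw [potential, if_neg h]
    have hlog := log_le_log (lt_max_of_lt_right hM) (max_le_max_right M hmono)
    exact mul_nonneg (by positivity) (sub_nonneg.2 hlog)

theorem sum_potential_le (ha : ∀ t, 0 ≤ a t) (haM : ∀ t, a t ≤ M) (n : ℕ) :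
    ∑ t ∈ range n, potential M a t ≤ 2 * M * log n := by
  obtain hM | hM := ((ha 0).trans (haM 0)).eq_or_lt
  · have hzero (t) : potential M a t = 0 := by
      simp [potential, le_antisymm (hM ▸ haM t) (ha t)]
    rw [sum_eq_zero fun t _ => hzero t, ← hM]
    simp
  rcases n.eq_zero_or_pos with rfl | hn
  · simp
  set L := fun t => log (max (∑ i ∈ range t, a i) M)
  have hmax : max (∑ i ∈ range n, a i) M ≤ n * M :=
    max_le (by simpa using sum_le_sum fun i (_ : i ∈ range n) => haM i)
      (le_mul_of_one_le_left hM.le (by exact_mod_cast hn))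
  have hLn : L n ≤ log n + log M := by
    rw [← log_mul (by positivity) hM.ne']
    exact log_le_log (lt_max_of_lt_right hM) hmax
  calc ∑ t ∈ range n, potential M a t ≤ ∑ t ∈ range n, 2 * M * (L (t + 1) - L t) :=
        sum_le_sum fun t _ => potential_le_two_mul_log_sub ha haM hM t
    _ = 2 * M * (L n - L 0) := by rw [← mul_sum, sum_range_sub]
    _ ≤ 2 * M * log n := by
        gcongr
        simp only [L, range_zero, sum_empty, max_eq_right hM.le] at hLn ⊢
        linarith

theorem mul_le_burnIn_add_potential (ha : ∀ t, 0 ≤ a t) (haM : ∀ t, a t ≤ M) {g B η : ℝ}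
    (hg : g ∈ Set.Icc 0 B) (hη : 0 < η) (t : ℕ) :
    a t * g ≤ B * burnIn M a t + η / 2 * potential M a t +
      (∑ i ∈ range t, a i) * g ^ 2 / (2 * η) := by
  set s := ∑ i ∈ range t, a i
  have hs : 0 ≤ s := sum_nonneg fun i _ => ha i
  have hrest : 0 ≤ s * g ^ 2 / (2 * η) := by positivity
  by_cases h : s < M
  · rw [burnIn, potential, if_pos h, if_neg h.not_ge]
    nlinarith [mul_le_mul_of_nonneg_left hg.2 (ha t)]
  · rw [burnIn, potential, if_neg h, if_pos (not_lt.1 h)]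
    obtain hs0 | hs0 := hs.eq_or_lt
    · have : a t = 0 := le_antisymm ((haM t).trans (hs0 ▸ not_lt.1 h)) (ha t)
      simp [this, hrest]
    · have hsq : η / 2 * (a t ^ 2 / s) + s * g ^ 2 / (2 * η) - a t * g =
          (η * a t - s * g) ^ 2 / (2 * η * s) := by
        field_simp; ring
      nlinarith [show 0 ≤ (η * a t - s * g) ^ 2 / (2 * η * s) by positivity]

theorem sum_mul_le (ha : ∀ t, 0 ≤ a t) (haM : ∀ t, a t ≤ M) {g : ℕ → ℝ} {B η : ℝ}
    (hg : ∀ t, g t ∈ Set.Icc 0 B) (hη : 0 < η) (n : ℕ) :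
    ∑ t ∈ range n, a t * g t ≤ 2 * B * M + η * M * log n +
      (∑ t ∈ range n, ∑ i ∈ range t, a i * g t ^ 2) / (2 * η) := by
  have hB : 0 ≤ B := (hg 0).1.trans (hg 0).2
  calc ∑ t ∈ range n, a t * g t ≤ ∑ t ∈ range n, (B * burnIn M a t + η / 2 * potential M a t +
        (∑ i ∈ range t, a i) * g t ^ 2 / (2 * η)) :=
        sum_le_sum fun t _ => mul_le_burnIn_add_potential ha haM (hg t) hη t
    _ = B * ∑ t ∈ range n, burnIn M a t + η / 2 * ∑ t ∈ range n, potential M a t +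
        (∑ t ∈ range n, ∑ i ∈ range t, a i * g t ^ 2) / (2 * η) := by
        simp only [sum_add_distrib, mul_sum, sum_div, sum_mul]
    _ ≤ B * (2 * M) + η / 2 * (2 * M * log n) +
        (∑ t ∈ range n, ∑ i ∈ range t, a i * g t ^ 2) / (2 * η) := by
        gcongr
        exacts [sum_burnIn_le ha haM n, sum_potential_le ha haM n]
    _ = _ := by ring

theorem sum_tsum_mul_le {X : Type*} {d : ℕ → X → ℝ} {μ : X → ℝ} {g : ℕ → X → ℝ} {C B η : ℝ}
    (hd0 : ∀ t x, 0 ≤ d t x) (hdsum : ∀ t, Summable (d t)) (hμsum : Summable μ)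
    (hμ1 : ∑' x, μ x = 1) (hcov : ∀ t x, d t x ≤ C * μ x) (hg : ∀ t x, g t x ∈ Set.Icc 0 B)
    (hη : 0 < η) (T : ℕ) :
    ∑ t ∈ range T, ∑' x, d t x * g t x ≤ 2 * B * C + η * C * log T +
      (∑ t ∈ range T, ∑ i ∈ range t, ∑' x, d i x * g t x ^ 2) / (2 * η) := by
  have hdg (i t : ℕ) : Summable fun x => d i x * g t x :=
    summable_mul_of_mem_Icc (hd0 i) (hdsum i) (hg t)
  have hdg2 (i t : ℕ) : Summable fun x => d i x * g t x ^ 2 :=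
    summable_mul_of_mem_Icc (hd0 i) (hdsum i) fun x =>
      ⟨by positivity, pow_le_pow_left₀ (hg t x).1 (hg t x).2 2⟩
  have hpoint (x : X) : ∑ t ∈ range T, d t x * g t x ≤ (2 * B + η * log T) * C * μ x +
      (∑ t ∈ range T, ∑ i ∈ range t, d i x * g t x ^ 2) / (2 * η) := by
    have := sum_mul_le (fun i => hd0 i x) (fun i => hcov i x) (fun t => hg t x) hη T
    linarith
  have hsum2 : Summable fun x => ∑ t ∈ range T, ∑ i ∈ range t, d i x * g t x ^ 2 :=
    summable_sum fun t _ => summable_sum fun i _ => hdg2 i t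
  calc ∑ t ∈ range T, ∑' x, d t x * g t x = ∑' x, ∑ t ∈ range T, d t x * g t x :=
        (Summable.tsum_finsetSum fun t _ => hdg t t).symm
    _ ≤ ∑' x, ((2 * B + η * log T) * C * μ x +
        (∑ t ∈ range T, ∑ i ∈ range t, d i x * g t x ^ 2) / (2 * η)) :=
        Summable.tsum_le_tsum hpoint (summable_sum fun t _ => hdg t t)
          ((hμsum.mul_left _).add (hsum2.div_const _))
    _ = (2 * B + η * log T) * C +
        (∑ t ∈ range T, ∑ i ∈ range t, ∑' x, d i x * g t x ^ 2) / (2 * η) := by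
        rw [Summable.tsum_add (hμsum.mul_left _) (hsum2.div_const _), tsum_mul_left, hμ1,
          tsum_div_const, Summable.tsum_finsetSum fun t _ => summable_sum fun i _ => hdg2 i t]
        simp only [mul_one, Summable.tsum_finsetSum fun i _ => hdg2 i _]
    _ = _ := by ring

theorem sum_tsum_mul_le_sqrt {X : Type*} {d : ℕ → X → ℝ} {μ : X → ℝ} {g : ℕ → X → ℝ}
    {C B β : ℝ} (hC : 0 < C) {T : ℕ} (hT : 1 ≤ T) (hd0 : ∀ t x, 0 ≤ d t x)
    (hdsum : ∀ t, Summable (d t)) (hμsum : Summable μ) (hμ1 : ∑' x, μ x = 1)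
    (hcov : ∀ t x, d t x ≤ C * μ x) (hg : ∀ t x, g t x ∈ Set.Icc 0 B)
    (hsq : ∀ t ∈ range T, ∑ i ∈ range t, ∑' x, d i x * g t x ^ 2 ≤ β ^ 2) :
    ∑ t ∈ range T, ∑' x, d t x * g t x ≤ 2 * √(β ^ 2 * C * T * log (2 * T)) + 2 * B * C := by
  have hT' : (1 : ℝ) ≤ T := by exact_mod_cast hT
  have hlog : 0 < log (2 * T) := log_pos (by linarith)
  have hsqsum : ∑ t ∈ range T, ∑ i ∈ range t, ∑' x, d i x * g t x ^ 2 ≤ T * β ^ 2 := by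
    simpa using sum_le_sum hsq
  have hopt := le_two_mul_sqrt_mul_of_forall_le
    (S := ∑ t ∈ range T, ∑' x, d t x * g t x - 2 * B * C) (a := C * log (2 * T))
    (b := T * β ^ 2 / 2) (by positivity) fun η hη => by
      have hbound := sum_tsum_mul_le hd0 hdsum hμsum hμ1 hcov hg hη T
      have hlogT : η * C * log T ≤ η * (C * log (2 * T)) := by
        rw [← mul_assoc]; gcongr; linarith
      have hsq' : (∑ t ∈ range T, ∑ i ∈ range t, ∑' x, d i x * g t x ^ 2) / (2 * η) ≤
          T * β ^ 2 / 2 / η := by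
        rw [div_div]; gcongr
      linarith
  have hroot : √(C * log (2 * T) * (T * β ^ 2 / 2)) ≤ √(β ^ 2 * C * T * log (2 * T)) :=
    sqrt_le_sqrt <| by
      have : 0 ≤ C * log (2 * T) * (T * β ^ 2) := by positivity
      linarith
  linarith

end PushforwardCoverability

/-- pushforward coverability potential lemma. Here
`d t x = P[x_h = x | x_{h-1} = x^(t), a_{h-1} = a^(t)]` is the next-state
distribution from the `t`-th state-action pair, pushforward coverability
is witnessed by the distribution `μ` with `d t x ≤ C_push · μ x`, and
`g t : X → [0, B]`.  If for all `t < T`,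
`∑_{i<t} E[(g t (x_h))² | x^(i), a^(i)] ≤ β²`, then
`∑_t E[g t (x_h) | x^(t), a^(t)] ≤ 2 √(β² C_push T log(2T)) + 2 B C_push`,
and consequently the minimum over `t` is at most
`2 √(β² C_push log(2T)/T) + 2 B C_push / T`. -/
theorem stmt_10 {X : Type*}
    (Cpush B β : ℝ) (hC : 0 < Cpush)
    (T : ℕ) (hT : 1 ≤ T)
    (d : ℕ → X → ℝ) (μ : X → ℝ)
    (hd0 : ∀ t x, 0 ≤ d t x) (hdsum : ∀ t, Summable (d t))
    (hμsum : Summable μ) (hμ1 : ∑' x, μ x = 1)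
    (hcov : ∀ t x, d t x ≤ Cpush * μ x)
    (g : ℕ → X → ℝ) (hg : ∀ t x, g t x ∈ Set.Icc 0 B)
    (hsq : ∀ t ∈ Finset.range T,
      ∑ i ∈ Finset.range t, ∑' x, d i x * (g t x)^2 ≤ β^2) :
    (∑ t ∈ Finset.range T, ∑' x, d t x * g t x
        ≤ 2 * Real.sqrt (β^2 * Cpush * T * Real.log (2 * T)) + 2 * B * Cpush) ∧
    ((Finset.range T).inf' (Finset.nonempty_range_iff.mpr (by omega))
        (fun t => ∑' x, d t x * g t x)
      ≤ 2 * Real.sqrt (β^2 * Cpush * Real.log (2 * T) / T) + 2 * B * Cpush / T) := by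
  have hsum := PushforwardCoverability.sum_tsum_mul_le_sqrt hC hT hd0 hdsum hμsum hμ1 hcov hg hsq
  refine ⟨hsum, ?_⟩
  have hT0 : (0 : ℝ) < T := by exact_mod_cast hT
  have hsqrt : √(β ^ 2 * Cpush * T * log (2 * T)) = T * √(β ^ 2 * Cpush * log (2 * T) / T) := by
    rw [show β ^ 2 * Cpush * T * log (2 * T) = β ^ 2 * Cpush * log (2 * T) / T * T ^ 2 by
      field_simp, sqrt_mul' _ (sq_nonneg _), sqrt_sq hT0.le, mul_comm]
  calc _ ≤ 𝔼 t ∈ range T, ∑' x, d t x * g t x :=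
      le_expect (nonempty_range_iff.2 (by omega)) fun t ht => inf'_le _ ht
    _ = (∑ t ∈ range T, ∑' x, d t x * g t x) / T := by rw [expect_eq_sum_div_card, card_range]
    _ ≤ (2 * √(β ^ 2 * Cpush * T * log (2 * T)) + 2 * B * Cpush) / T := by gcongr
    _ = _ := by rw [hsqrt]; field_simp
end

section
/- Let ζ_1,…,ζ_H be i.i.d. Uniform([0,1/2]). For fixed ε ∈ (0,1/2), with probability at least 1 − 24·S·A·H·ε over the draw of ζ_{1:H}, the following holds for every layer h ∈ [H] and every pair (s,a) ∈ S × A simultaneously: the half-open unit interval (⌈g_h(s,a)/ε + ζ_h⌉ − 1, ⌈g_h(s,a)/ε + ζ_h⌉] contains the point g_h(s,a)/ε + ζ_h with margin 4ε on both sides, i.e., g_h(s,a)/ε + ζ_h + 4ε ≤ ⌈g_h(s,a)/ε + ζ_h⌉ and g_h(s,a)/ε + ζ_h − 4ε > ⌈g_h(s,a)/ε + ζ_h⌉ − 1. -/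
/-!
The margin condition fails only when `y = g h s a / ε + ζ h` lies within `4ε` of an integer,
i.e. when the image of `ζ h` in the circle `ℝ/ℤ` falls into a closed ball of radius `4ε`
around `-g h s a / ε`. Since `[0, 1/2]` sits inside a single period, the covering map `ℝ → ℝ/ℤ`
preserves measure on it, so this has probability at most `2 · 8ε = 16ε` under the uniform law
on `[0, 1/2]`. A union bound over the `H·|S|·|A|` triples finishes the proof.
-/

open MeasureTheory Set
open scoped ENNReal

theorem UnitAddCircle.norm_coe_le_of_not_ceil_margin {y r : ℝ}
    (h : ¬ (y + r ≤ ⌈y⌉ ∧ y - r > ⌈y⌉ - 1)) : ‖(y : UnitAddCircle)‖ ≤ r := by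
  rw [UnitAddCircle.norm_eq]
  have hle := Int.le_ceil y
  have hlt := Int.ceil_lt_add_one y
  rcases not_and_or.1 h with h | h
  · calc |y - round y| ≤ |y - ⌈y⌉| := round_le y _
      _ ≤ r := by rw [abs_le]; constructor <;> linarith
  · calc |y - round y| ≤ |y - (⌈y⌉ - 1 : ℤ)| := round_le y _
      _ ≤ r := by push_cast; rw [abs_le]; constructor <;> linarith

theorem UnitAddCircle.volume_inter_setOf_norm_coe_add_le {s : Set ℝ} {c : ℝ}
    (hs : s ⊆ Ioc c (c + 1)) (x r : ℝ) :
    volume (s ∩ {t | ‖((x + t : ℝ) : UnitAddCircle)‖ ≤ r}) ≤ ENNReal.ofReal (2 * r) := by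
  have hball : {t : ℝ | ‖((x + t : ℝ) : UnitAddCircle)‖ ≤ r}
      = (↑) ⁻¹' Metric.closedBall (-(x : UnitAddCircle)) r := by
    ext t
    simp only [mem_ofPred_eq, mem_preimage, Metric.mem_closedBall, dist_eq_norm, sub_neg_eq_add,
      AddCircle.coe_add, add_comm]
  calc volume (s ∩ {t | ‖((x + t : ℝ) : UnitAddCircle)‖ ≤ r})
      ≤ volume.restrict (Ioc c (c + 1)) {t | ‖((x + t : ℝ) : UnitAddCircle)‖ ≤ r} := by
        rw [Measure.restrict_apply' measurableSet_Ioc, inter_comm]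
        exact measure_mono (inter_subset_inter_right _ hs)
    _ = volume (Metric.closedBall (-(x : UnitAddCircle)) r) := by
        rw [hball]
        exact (UnitAddCircle.measurePreserving_mk c).measure_preimage
          measurableSet_closedBall.nullMeasurableSet
    _ ≤ ENNReal.ofReal (2 * r) := by
        rw [AddCircle.volume_closedBall]
        exact ENNReal.ofReal_le_ofReal (min_le_right _ _)

theorem uniformIcc_half_setOf_norm_coe_add_le (x r : ℝ) :
    ((2 : ℝ≥0∞) • volume.restrict (Icc (0 : ℝ) (1/2)))
      {t | ‖((x + t : ℝ) : UnitAddCircle)‖ ≤ r} ≤ ENNReal.ofReal (4 * r) := by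
  have hIcc : Icc (0 : ℝ) (1/2) ⊆ Ioc (-(1/2)) (-(1/2) + 1) :=
    Icc_subset_Ioc (by norm_num) (by norm_num)
  rw [Measure.smul_apply, Measure.restrict_apply' measurableSet_Icc, inter_comm, smul_eq_mul,
    show 4 * r = 2 * (2 * r) by ring, ENNReal.ofReal_mul zero_le_two, ENNReal.ofReal_ofNat]
  gcongr
  exact UnitAddCircle.volume_inter_setOf_norm_coe_add_le hIcc x r

theorem ofReal_one_sub_card_mul_le_measure_of_compl_subset_iUnion {Ω ι : Type*}
    [MeasurableSpace Ω] [Fintype ι] {P : Measure Ω} [IsProbabilityMeasure P]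
    {s : Set Ω} {t : ι → Set Ω} {c : ℝ} (hc : 0 ≤ c)
    (hst : sᶜ ⊆ ⋃ i, t i) (ht : ∀ i, P (t i) ≤ ENNReal.ofReal c) :
    ENNReal.ofReal (1 - Fintype.card ι * c) ≤ P s := by
  have hcompl : P sᶜ ≤ ENNReal.ofReal (Fintype.card ι * c) :=
    calc P sᶜ ≤ ∑ i, P (t i) := (measure_mono hst).trans (measure_iUnion_fintype_le P t)
      _ ≤ Fintype.card ι • ENNReal.ofReal c := Finset.sum_le_card_nsmul _ _ _ fun i _ => ht i
      _ = ENNReal.ofReal (Fintype.card ι * c) := by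
        rw [nsmul_eq_mul, ENNReal.ofReal_mul (Nat.cast_nonneg _), ENNReal.ofReal_natCast]
  have hcover : 1 ≤ P s + P sᶜ := by
    rw [← measure_univ (μ := P), ← union_compl_self s]
    exact measure_union_le _ _
  rw [ENNReal.ofReal_sub _ (by positivity), ENNReal.ofReal_one, tsub_le_iff_right]
  exact hcover.trans (by gcongr)

theorem stmt_15_general {S A Ω : Type*} [Fintype S] [Fintype A]
    [MeasurableSpace Ω] (P : Measure Ω) [IsProbabilityMeasure P]
    (H : ℕ) (ε : ℝ) (hε : ε ∈ Set.Ioo (0 : ℝ) (1/2))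
    (g : Fin H → S → A → ℝ)
    (ζ : Fin H → Ω → ℝ)
    (hmeas : ∀ h, Measurable (ζ h))
    (hunif : ∀ h, Measure.map (ζ h) P
      = (2 : ℝ≥0∞) • volume.restrict (Set.Icc (0 : ℝ) (1/2))) :
    ENNReal.ofReal (1 - 24 * Fintype.card S * Fintype.card A * H * ε) ≤
      P {ω | ∀ (h : Fin H) (s : S) (a : A),
        g h s a / ε + ζ h ω + 4 * ε ≤ (⌈g h s a / ε + ζ h ω⌉ : ℝ) ∧
        g h s a / ε + ζ h ω - 4 * ε > (⌈g h s a / ε + ζ h ω⌉ : ℝ) - 1} := by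
  have hε0 : 0 ≤ ε := hε.1.le
  let Bad (p : Fin H × S × A) : Set Ω :=
    ζ p.1 ⁻¹' {t | ‖((g p.1 p.2.1 p.2.2 / ε + t : ℝ) : UnitAddCircle)‖ ≤ 4 * ε}
  have hBad (p : Fin H × S × A) : P (Bad p) ≤ ENNReal.ofReal (16 * ε) :=
    calc P (Bad p) ≤ P.map (ζ p.1) _ := Measure.le_map_apply (hmeas p.1).aemeasurable _
      _ ≤ ENNReal.ofReal (4 * (4 * ε)) := by
        rw [hunif]; exact uniformIcc_half_setOf_norm_coe_add_le _ _
      _ = ENNReal.ofReal (16 * ε) := by ring_nf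
  refine le_trans (ENNReal.ofReal_le_ofReal ?_)
    (ofReal_one_sub_card_mul_le_measure_of_compl_subset_iUnion (by positivity) ?_ hBad)
  · simp only [Fintype.card_prod, Fintype.card_fin]
    push_cast
    nlinarith [show 0 ≤ (Fintype.card S : ℝ) * Fintype.card A * H * ε by positivity]
  · intro ω hω
    simp only [mem_compl_iff, mem_ofPred_eq, not_forall] at hω
    obtain ⟨h, s, a, hfail⟩ := hω
    exact mem_iUnion.2 ⟨(h, s, a), UnitAddCircle.norm_coe_le_of_not_ceil_margin hfail⟩

/-- Let `ζ_1, …, ζ_H` be i.i.d. `Uniform([0, 1/2])` and let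
`g h : S × A → [0, H - h + 1]` be arbitrary fixed functions on the finite set
`S × A`.  With probability at least `1 - 24·|S|·|A|·H·ε`, simultaneously for
every layer `h` and every `(s,a)`, the point `g h s a / ε + ζ h` sits in its
ceiling unit interval with margin `4ε` on both sides:
`g h s a/ε + ζ h + 4ε ≤ ⌈g h s a/ε + ζ h⌉` and
`g h s a/ε + ζ h − 4ε > ⌈g h s a/ε + ζ h⌉ − 1`. -/
theorem stmt_15 {S A Ω : Type*} [Fintype S] [Fintype A]
    [MeasurableSpace Ω] (P : Measure Ω) [IsProbabilityMeasure P]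
    (H : ℕ) (ε : ℝ) (hε : ε ∈ Set.Ioo (0 : ℝ) (1/2))
    (g : Fin H → S → A → ℝ)
    (hg : ∀ (h : Fin H) s a, g h s a ∈ Set.Icc (0 : ℝ) ((H : ℝ) - (h : ℕ) + 1))
    (ζ : Fin H → Ω → ℝ)
    (hmeas : ∀ h, Measurable (ζ h))
    (hindep : ProbabilityTheory.iIndepFun ζ P)
    (hunif : ∀ h, Measure.map (ζ h) P
      = (2 : ℝ≥0∞) • volume.restrict (Set.Icc (0 : ℝ) (1/2))) :
    ENNReal.ofReal (1 - 24 * Fintype.card S * Fintype.card A * H * ε) ≤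
      P {ω | ∀ (h : Fin H) (s : S) (a : A),
        g h s a / ε + ζ h ω + 4 * ε ≤ (⌈g h s a / ε + ζ h ω⌉ : ℝ) ∧
        g h s a / ε + ζ h ω - 4 * ε > (⌈g h s a / ε + ζ h ω⌉ : ℝ) - 1} :=
  stmt_15_general P H ε hε g ζ hmeas hunif
end

section
/- Fix a layer h of an MDP satisfying pushforward coverability with constant C_push, with occupancy kernels d^(t)_h(x) := P[x_h = x | x_{h−1} = x^(t), a_{h−1} = a^(t)] and cumulative kernels d̃^(t)_h := ∑_{i<t} d^(i)_h. Define the burn-in time τ_h(x) := min{t : d̃^(t)_h(x) ≥ C_push · μ_h(x)} where μ_h attains the pushforward coverability infimum. Then ∑_{t=1}^T ∑_{x} d^(t)_h(x) 1{t < τ_h(x)} ≤ 2 C_push, and ∑_{t=1}^T ∑_{x} (d^(t)_h(x))² / d̃^(t)_h(x) · 1{t ≥ τ_h(x)} ≤ 4 C_push log(T + 1). -/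
open Finset

lemma key_log (u : ℝ) (h0 : 0 ≤ u) (h1 : u ≤ 1) : u ≤ 2 * Real.log (1 + u) := by
  have h2 : Real.exp (u / 2) ≤ 1 + u := by
    have hmul : Real.exp (u / 2) * Real.exp (-(u / 2)) = 1 := by
      rw [← Real.exp_add]; simp
    have h3 := Real.add_one_le_exp (-(u / 2))
    have h4 := Real.exp_pos (u / 2)
    nlinarith
  have h5 := Real.log_le_log (Real.exp_pos _) h2
  rw [Real.log_exp] at h5
  linarith

lemma auxA (b : ℝ) (a : ℕ → ℝ) (ha0 : ∀ t, 0 ≤ a t) (hab : ∀ t, a t ≤ b) (T : ℕ) :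
    (∑ t ∈ Finset.range T, (if (∑ i ∈ Finset.range t, a i) < b then a t else 0))
      ≤ ∑ i ∈ Finset.range T, a i ∧
    (∑ t ∈ Finset.range T, (if (∑ i ∈ Finset.range t, a i) < b then a t else 0)) ≤ 2 * b := by
  induction T with
  | zero => constructor <;> simp <;> nlinarith [ha0 0, hab 0]
  | succ T ih =>
    rw [Finset.sum_range_succ, Finset.sum_range_succ (f := a)]
    by_cases h : (∑ i ∈ Finset.range T, a i) < b
    · rw [if_pos h]
      exact ⟨by linarith [ih.1], by linarith [ih.1, hab T]⟩
    · rw [if_neg h]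
      exact ⟨by linarith [ih.1, ha0 T], by linarith [ih.2]⟩

lemma auxB (b : ℝ) (hb : 0 ≤ b) (a : ℕ → ℝ) (ha0 : ∀ t, 0 ≤ a t) (hab : ∀ t, a t ≤ b)
    (T : ℕ) :
    ∑ t ∈ Finset.range T,
      (if b ≤ ∑ i ∈ Finset.range t, a i then (a t) ^ 2 / (∑ i ∈ Finset.range t, a i) else 0)
      ≤ 2 * b * Real.log (T + 1) := by
  rcases hb.eq_or_lt with hb0 | hb0
  · have ha : ∀ t, a t = 0 := fun t => le_antisymm (hb0 ▸ hab t) (ha0 t)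
    have hz : ∀ t ∈ Finset.range T,
        (if b ≤ ∑ i ∈ Finset.range t, a i then (a t) ^ 2 / (∑ i ∈ Finset.range t, a i) else 0)
          = 0 := by
      intro t _; rw [ha t]; simp
    rw [Finset.sum_congr rfl hz, Finset.sum_const_zero, ← hb0]
    simp
  · set S : ℕ → ℝ := fun t => ∑ i ∈ Finset.range t, a i with hS
    have hSsucc : ∀ t, S (t + 1) = S t + a t := fun t => Finset.sum_range_succ a t
    have hSmono : ∀ t, S t ≤ S (t + 1) := fun t => by rw [hSsucc t]; linarith [ha0 t]
    set g : ℕ → ℝ := fun t => Real.log (max (S t) b) with hg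
    have hterm : ∀ t, (if b ≤ S t then (a t) ^ 2 / S t else 0) ≤ 2 * b * (g (t + 1) - g t) := by
      intro t
      by_cases h : b ≤ S t
      · rw [if_pos h]
        have hS0 : 0 < S t := lt_of_lt_of_le hb0 h
        have hmax1 : max (S t) b = S t := max_eq_left h
        have hmax2 : max (S (t + 1)) b = S (t + 1) := max_eq_left (le_trans h (hSmono t))
        have hu0 : 0 ≤ a t / S t := div_nonneg (ha0 t) hS0.le
        have hu1 : a t / S t ≤ 1 := (div_le_one hS0).mpr (le_trans (hab t) h)
        have hk := key_log _ hu0 hu1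
        have h1u : (1 : ℝ) + a t / S t = S (t + 1) / S t := by
          rw [hSsucc t]; field_simp
        have hlog : Real.log (S (t + 1) / S t)
            = Real.log (S (t + 1)) - Real.log (S t) :=
          Real.log_div (hS0.trans_le (hSmono t)).ne' hS0.ne'
        have : (a t) ^ 2 / S t ≤ 2 * b * (Real.log (S (t + 1)) - Real.log (S t)) := by
          calc (a t) ^ 2 / S t = a t * (a t / S t) := by ring
            _ ≤ b * (a t / S t) := mul_le_mul_of_nonneg_right (hab t) hu0
            _ ≤ b * (2 * Real.log (1 + a t / S t)) :=
                mul_le_mul_of_nonneg_left hk hb0.le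
            _ = 2 * b * (Real.log (S (t + 1)) - Real.log (S t)) := by
                rw [h1u, hlog]; ring
        simpa only [hg, hmax1, hmax2] using this
      · rw [if_neg h]
        have hpos : (0 : ℝ) < max (S t) b := lt_max_of_lt_right hb0
        have hle : max (S t) b ≤ max (S (t + 1)) b := max_le_max (hSmono t) le_rfl
        have := Real.log_le_log hpos hle
        have h2b : (0 : ℝ) ≤ 2 * b := by linarith
        simp only [hg]
        nlinarith
    calc ∑ t ∈ Finset.range T, (if b ≤ S t then (a t) ^ 2 / S t else 0)
        ≤ ∑ t ∈ Finset.range T, 2 * b * (g (t + 1) - g t) :=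
          Finset.sum_le_sum fun t _ => hterm t
      _ = 2 * b * (g T - g 0) := by rw [← Finset.mul_sum, Finset.sum_range_sub]
      _ ≤ 2 * b * Real.log (T + 1) := by
          have hS0 : S 0 = 0 := by simp [hS]
          have hg0 : g 0 = Real.log b := by
            simp only [hg, hS0]
            rw [max_eq_right hb0.le]
          have hST : S T ≤ T * b := by
            calc S T ≤ ∑ _i ∈ Finset.range T, b := Finset.sum_le_sum fun i _ => hab i
              _ = T * b := by rw [Finset.sum_const, Finset.card_range]; ring
          have hmaxle : max (S T) b ≤ (T + 1) * b := by
            apply max_le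
            · nlinarith
            · nlinarith [Nat.cast_nonneg (α := ℝ) T]
          have hgT : g T ≤ Real.log ((T + 1) * b) :=
            Real.log_le_log (lt_max_of_lt_right hb0) hmaxle
          have hmul : Real.log ((T + 1 : ℝ) * b) = Real.log (T + 1) + Real.log b := by
            rw [Real.log_mul (by positivity) hb0.ne']
          have : g T - g 0 ≤ Real.log (T + 1) := by
            rw [hg0]; rw [hmul] at hgT; linarith
          nlinarith

/-- key estimates for the pushforward coverability potential
lemma. Here `d t x = P[x_h = x | x_{h-1} = x^(t), a_{h-1} = a^(t)]` are the
occupancy kernels, `dtil t x = ∑_{i<t} d i x` the cumulative kernels, and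
pushforward coverability is witnessed by the distribution `μ` with
`d t x ≤ C_push · μ x`.  By monotonicity of `t ↦ dtil t x`, the condition
`t < τ_h(x)` (for the burn-in time `τ_h(x) = min {t | dtil t x ≥ C_push μ x}`)
is equivalent to `dtil t x < C_push · μ x`, and `t ≥ τ_h(x)` to
`C_push * μ x ≤ dtil t x`.  Then
`∑_{t<T} ∑_x d t x · 1{t < τ_h(x)} ≤ 2 C_push` and
`∑_{t<T} ∑_x (d t x)² / dtil t x · 1{t ≥ τ_h(x)} ≤ 4 C_push log(T+1)`. -/
theorem stmt_19 {X : Type*} [Countable X]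
    (Cpush : ℝ) (hC : 0 < Cpush) (T : ℕ)
    (d : ℕ → X → ℝ) (μ : X → ℝ)
    (hd0 : ∀ t x, 0 ≤ d t x) (hdsum : ∀ t, Summable (d t))
    (hd1 : ∀ t, ∑' x, d t x = 1)
    (hμ0 : ∀ x, 0 ≤ μ x) (hμsum : Summable μ) (hμ1 : ∑' x, μ x = 1)
    (hcov : ∀ t x, d t x ≤ Cpush * μ x) :
    (∑ t ∈ Finset.range T, ∑' x,
        (if (∑ i ∈ Finset.range t, d i x) < Cpush * μ x then d t x else 0)
      ≤ 2 * Cpush) ∧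
    (∑ t ∈ Finset.range T, ∑' x,
        (if Cpush * μ x ≤ ∑ i ∈ Finset.range t, d i x then
          (d t x)^2 / (∑ i ∈ Finset.range t, d i x) else 0)
      ≤ 4 * Cpush * Real.log (T + 1)) := by
  constructor
  · -- part 1
    have hf0 : ∀ t x, (0 : ℝ) ≤
        (if (∑ i ∈ Finset.range t, d i x) < Cpush * μ x then d t x else 0) := by
      intro t x; split <;> [exact hd0 t x; exact le_rfl]
    have hfle : ∀ t x,
        (if (∑ i ∈ Finset.range t, d i x) < Cpush * μ x then d t x else 0) ≤ d t x := by
      intro t x; split <;> [exact le_rfl; exact hd0 t x]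
    have hfs : ∀ t, Summable (fun x =>
        if (∑ i ∈ Finset.range t, d i x) < Cpush * μ x then d t x else 0) :=
      fun t => (hdsum t).of_nonneg_of_le (hf0 t) (hfle t)
    have hswap : ∑ t ∈ Finset.range T, ∑' x,
        (if (∑ i ∈ Finset.range t, d i x) < Cpush * μ x then d t x else 0)
        = ∑' x, ∑ t ∈ Finset.range T,
        (if (∑ i ∈ Finset.range t, d i x) < Cpush * μ x then d t x else 0) :=
      (Summable.tsum_finsetSum fun t _ => hfs t).symm
    rw [hswap]
    have hpt : ∀ x, (∑ t ∈ Finset.range T,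
        (if (∑ i ∈ Finset.range t, d i x) < Cpush * μ x then d t x else 0))
        ≤ 2 * (Cpush * μ x) := fun x =>
      (auxA (Cpush * μ x) (fun t => d t x) (fun t => hd0 t x) (fun t => hcov t x) T).2
    have hsb : Summable (fun x => 2 * (Cpush * μ x)) := (hμsum.mul_left Cpush).mul_left 2
    calc ∑' x, ∑ t ∈ Finset.range T,
          (if (∑ i ∈ Finset.range t, d i x) < Cpush * μ x then d t x else 0)
        ≤ ∑' x, 2 * (Cpush * μ x) :=
          Summable.tsum_le_tsum hpt
            (Summable.of_nonneg_of_le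
              (fun x => Finset.sum_nonneg fun t _ => hf0 t x) hpt hsb) hsb
      _ = 2 * Cpush := by rw [tsum_mul_left, tsum_mul_left, hμ1]; ring
  · -- part 2
    have hf0 : ∀ t x, (0 : ℝ) ≤
        (if Cpush * μ x ≤ ∑ i ∈ Finset.range t, d i x then
          (d t x)^2 / (∑ i ∈ Finset.range t, d i x) else 0) := by
      intro t x; split
      · have : (0 : ℝ) ≤ ∑ i ∈ Finset.range t, d i x :=
          Finset.sum_nonneg fun i _ => hd0 i x
        positivity
      · exact le_rfl
    have hfle : ∀ t x,
        (if Cpush * μ x ≤ ∑ i ∈ Finset.range t, d i x then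
          (d t x)^2 / (∑ i ∈ Finset.range t, d i x) else 0) ≤ d t x := by
      intro t x
      split
      · rename_i h
        have hS0 : (0 : ℝ) ≤ ∑ i ∈ Finset.range t, d i x :=
          Finset.sum_nonneg fun i _ => hd0 i x
        rcases hS0.eq_or_lt with h0 | h0
        · rw [← h0]; simp [hd0 t x]
        · have hdS : d t x ≤ ∑ i ∈ Finset.range t, d i x := le_trans (hcov t x) h
          calc (d t x)^2 / (∑ i ∈ Finset.range t, d i x)
              = d t x * (d t x / (∑ i ∈ Finset.range t, d i x)) := by ring
            _ ≤ d t x * 1 :=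
              mul_le_mul_of_nonneg_left ((div_le_one h0).mpr hdS) (hd0 t x)
            _ = d t x := mul_one _
      · exact hd0 t x
    have hfs : ∀ t, Summable (fun x =>
        if Cpush * μ x ≤ ∑ i ∈ Finset.range t, d i x then
          (d t x)^2 / (∑ i ∈ Finset.range t, d i x) else 0) :=
      fun t => (hdsum t).of_nonneg_of_le (hf0 t) (hfle t)
    have hswap : ∑ t ∈ Finset.range T, ∑' x,
        (if Cpush * μ x ≤ ∑ i ∈ Finset.range t, d i x then
          (d t x)^2 / (∑ i ∈ Finset.range t, d i x) else 0)
        = ∑' x, ∑ t ∈ Finset.range T,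
        (if Cpush * μ x ≤ ∑ i ∈ Finset.range t, d i x then
          (d t x)^2 / (∑ i ∈ Finset.range t, d i x) else 0) :=
      (Summable.tsum_finsetSum fun t _ => hfs t).symm
    rw [hswap]
    have hlogT : (0 : ℝ) ≤ Real.log (T + 1) :=
      Real.log_nonneg (by push_cast; linarith [Nat.cast_nonneg (α := ℝ) T])
    have hpt : ∀ x, (∑ t ∈ Finset.range T,
        (if Cpush * μ x ≤ ∑ i ∈ Finset.range t, d i x then
          (d t x)^2 / (∑ i ∈ Finset.range t, d i x) else 0))
        ≤ (2 * Cpush * Real.log (T + 1)) * μ x := by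
      intro x
      have := auxB (Cpush * μ x) (mul_nonneg hC.le (hμ0 x)) (fun t => d t x)
        (fun t => hd0 t x) (fun t => hcov t x) T
      calc _ ≤ 2 * (Cpush * μ x) * Real.log (T + 1) := this
        _ = (2 * Cpush * Real.log (T + 1)) * μ x := by ring
    have hsb : Summable (fun x => (2 * Cpush * Real.log (T + 1)) * μ x) :=
      hμsum.mul_left _
    calc ∑' x, ∑ t ∈ Finset.range T,
          (if Cpush * μ x ≤ ∑ i ∈ Finset.range t, d i x then
            (d t x)^2 / (∑ i ∈ Finset.range t, d i x) else 0)
        ≤ ∑' x, (2 * Cpush * Real.log (T + 1)) * μ x :=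
          Summable.tsum_le_tsum hpt
            (Summable.of_nonneg_of_le
              (fun x => Finset.sum_nonneg fun t _ => hf0 t x) hpt hsb) hsb
      _ = 2 * Cpush * Real.log (T + 1) := by rw [tsum_mul_left, hμ1, mul_one]
      _ ≤ 4 * Cpush * Real.log (T + 1) := by nlinarith
end
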